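/- arXiv:2503.09605 — 3 statements merged into one kernel-verified Lean document; each statement's English description precedes it below -/
import Mathlib

section
/- Let D₁ and D₂ be n×n diagonal real matrices with strictly increasing diagonal entries. Among all orthogonal matrices W, the Frobenius norm ‖D₂ − W D₁ Wᵀ‖_F is minimized exactly when W is diagonal with diagonal entries ±1; in particular there are exactly 2ⁿ minimizers. -/
/-!
Write `P = W ⊙ W` for the entrywise square of `W`. For orthogonal `W`,
`‖D₂ - W D₁ Wᵀ‖_F² = ‖d₂‖² + ‖d₁‖² - 2 d₂ ⬝ P d₁`, so minimising the distance means maximising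
`d₂ ⬝ P d₁`, and `P` is doubly stochastic. By Birkhoff's theorem `P` is a convex combination of
permutation matrices, and by the strict rearrangement inequality every permutation other than the
identity gives a strictly smaller value. Hence the maximum `d₂ ⬝ d₁` is attained exactly when
`P = 1`, i.e. when `W` is diagonal with entries `±1`.
-/

open Matrix

variable {ι R : Type*}

section Hadamard

variable [DecidableEq ι]

theorem hadamard_self_mem_doublyStochastic [Fintype ι] [CommRing R] [LinearOrder R]
    [IsOrderedRing R] {W : Matrix ι ι R} (hW : W * Wᵀ = 1) : W ⊙ W ∈ doublyStochastic R ι := by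
  have hWW : Wᵀ * W = 1 := mul_eq_one_comm.mp hW
  refine mem_doublyStochastic_iff_sum.2 ⟨fun i j => mul_self_nonneg (W i j), fun i => ?_,
    fun j => ?_⟩
  · simpa [mul_apply] using congr_fun₂ hW i i
  · simpa [mul_apply] using congr_fun₂ hWW j j

variable [Ring R] [NoZeroDivisors R] {W : Matrix ι ι R}

theorem hadamard_self_eq_one_iff :
    W ⊙ W = 1 ↔ W.IsDiag ∧ ∀ i, W i i = 1 ∨ W i i = -1 := by
  simp only [← ext_iff, hadamard_apply, one_apply]
  refine ⟨fun h => ⟨fun i j hij => ?_, fun i => ?_⟩, fun ⟨hdiag, hsign⟩ i j => ?_⟩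
  · simpa [hij] using h i j
  · simpa [mul_self_eq_one_iff] using h i i
  · rcases eq_or_ne i j with rfl | hij
    · simpa [mul_self_eq_one_iff] using hsign i
    · simp [hdiag hij, hij]

theorem mul_transpose_self_eq_one_of_hadamard_self_eq_one [Fintype ι] (h : W ⊙ W = 1) :
    W * Wᵀ = 1 := by
  obtain ⟨hdiag, -⟩ := hadamard_self_eq_one_iff.1 h
  rw [← (isDiag_iff_diagonal_diag W).1 hdiag, diagonal_transpose, diagonal_mul_diagonal,
    ← diagonal_one]
  exact congr_arg diagonal (funext fun i => by simpa using congr_fun₂ h i i)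

theorem ncard_setOf_hadamard_self_eq_one [Fintype ι] [NeZero (2 : R)] :
    {W : Matrix ι ι R | W ⊙ W = 1}.ncard = 2 ^ Fintype.card ι := by
  have hset : {W : Matrix ι ι R | W ⊙ W = 1} = diagonal '' Set.univ.pi fun _ => {1, -1} := by
    ext W
    simp only [Set.mem_ofPred_eq, hadamard_self_eq_one_iff, Set.mem_image, Set.mem_univ_pi,
      Set.mem_insert_iff, Set.mem_singleton_iff]
    constructor
    · rintro ⟨hdiag, hsign⟩
      exact ⟨W.diag, hsign, (isDiag_iff_diagonal_diag W).1 hdiag⟩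
    · rintro ⟨s, hs, rfl⟩
      exact ⟨isDiag_diagonal s, by simpa using hs⟩
  have hne : (1 : R) ≠ -1 := fun h =>
    (two_ne_zero : (2 : R) ≠ 0) (by rw [← one_add_one_eq_two, ← neg_add_cancel (1 : R), ← h])
  rw [hset, Set.ncard_image_of_injective _ diagonal_injective, Set.ncard_def,
    Set.encard_pi_eq_prod_encard]
  simp [Set.encard_pair hne]

end Hadamard

section CommRing

variable [Fintype ι] [DecidableEq ι] [CommRing R]

theorem sum_sq_diagonal_sub_conj (d₁ d₂ : ι → R) {W : Matrix ι ι R} (hW : W * Wᵀ = 1) :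
    ∑ i, ∑ j, (diagonal d₂ - W * diagonal d₁ * Wᵀ) i j ^ 2 =
      ∑ i, d₂ i ^ 2 + ∑ i, d₁ i ^ 2 - 2 * (d₂ ⬝ᵥ ((W ⊙ W) *ᵥ d₁)) := by
  have hWW : Wᵀ * W = 1 := mul_eq_one_comm.mp hW
  set B := W * diagonal d₁ * Wᵀ with hB_def
  have hB : Bᵀ = B := by simp [B, transpose_mul, Matrix.mul_assoc]
  have hBB : trace (B * B) = ∑ i, d₁ i ^ 2 := by
    calc trace (B * B) = trace (W * (diagonal d₁ * diagonal d₁) * Wᵀ) := by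
          simp only [B, Matrix.mul_assoc, ← Matrix.mul_assoc Wᵀ W, hWW, Matrix.one_mul]
      _ = ∑ i, d₁ i ^ 2 := by
          rw [trace_mul_cycle, hWW, Matrix.one_mul, diagonal_mul_diagonal, trace_diagonal]
          simp only [sq]
  have hcross : trace (diagonal d₂ * B) = d₂ ⬝ᵥ ((W ⊙ W) *ᵥ d₁) := by
    rw [dotProduct_mulVec, dotProduct_vecMul_hadamard, transpose_mul, diagonal_transpose,
      hB_def]
    simp only [Matrix.mul_assoc]
  calc ∑ i, ∑ j, (diagonal d₂ - B) i j ^ 2 = trace ((diagonal d₂ - B) * (diagonal d₂ - B)ᵀ) := by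
        simp only [sq]; rfl
    _ = trace (diagonal d₂ * diagonal d₂) - 2 * trace (diagonal d₂ * B) + trace (B * B) := by
        rw [transpose_sub, diagonal_transpose, hB, sub_mul, mul_sub, mul_sub, trace_sub, trace_sub,
          trace_sub, trace_mul_comm B (diagonal d₂)]
        ring
    _ = ∑ i, d₂ i ^ 2 + ∑ i, d₁ i ^ 2 - 2 * (d₂ ⬝ᵥ ((W ⊙ W) *ᵥ d₁)) := by
        rw [hcross, hBB, diagonal_mul_diagonal, trace_diagonal]
        simp only [sq]
        ring

theorem dotProduct_sum_smul_permMatrix_mulVec (a b : ι → R) (w : Equiv.Perm ι → R) :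
    b ⬝ᵥ ((∑ σ, w σ • σ.permMatrix R) *ᵥ a) = ∑ σ, w σ * ∑ i, b i * a (σ i) := by
  simp only [sum_mulVec, smul_mulVec, permMatrix_mulVec, dotProduct, Finset.sum_apply,
    Pi.smul_apply, Function.comp_apply, smul_eq_mul, Finset.mul_sum]
  rw [Finset.sum_comm]
  simp only [mul_left_comm]

end CommRing

section Rearrangement

variable [Fintype ι] [LinearOrder ι] [Field R] [LinearOrder R] [IsStrictOrderedRing R]
  {a b : ι → R}

theorem sum_mul_comp_perm_lt_sum_mul_of_ne_one (ha : StrictMono a) (hb : StrictMono b)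
    {σ : Equiv.Perm ι} (hσ : σ ≠ 1) : ∑ i, b i * a (σ i) < ∑ i, b i * a i := by
  refine (hb.monotone.monovary ha.monotone).sum_mul_comp_perm_lt_sum_mul_iff.2 fun h => hσ ?_
  have hσ_mono : Monotone σ := fun i j hij => ha.le_iff_le.1 (hb.trans_monovary h.symm hij)
  exact Equiv.ext fun i => (hσ_mono.strictMono_of_injective σ.injective).apply_eq

theorem dotProduct_mulVec_le_of_mem_doublyStochastic (hab : Monovary b a) {P : Matrix ι ι R}
    (hP : P ∈ doublyStochastic R ι) : b ⬝ᵥ (P *ᵥ a) ≤ b ⬝ᵥ a := by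
  obtain ⟨w, hw_nonneg, hw_sum, rfl⟩ := exists_eq_sum_perm_of_mem_doublyStochastic hP
  calc b ⬝ᵥ ((∑ σ, w σ • σ.permMatrix R) *ᵥ a) = ∑ σ, w σ * ∑ i, b i * a (σ i) :=
        dotProduct_sum_smul_permMatrix_mulVec a b w
    _ ≤ ∑ σ, w σ * ∑ i, b i * a i :=
        Finset.sum_le_sum fun σ _ =>
          mul_le_mul_of_nonneg_left hab.sum_mul_comp_perm_le_sum_mul (hw_nonneg σ)
    _ = b ⬝ᵥ a := by rw [← Finset.sum_mul, hw_sum, one_mul, dotProduct]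

theorem eq_one_of_dotProduct_mulVec_eq (ha : StrictMono a) (hb : StrictMono b) {P : Matrix ι ι R}
    (hP : P ∈ doublyStochastic R ι) (h : b ⬝ᵥ (P *ᵥ a) = b ⬝ᵥ a) : P = 1 := by
  obtain ⟨w, hw_nonneg, hw_sum, rfl⟩ := exists_eq_sum_perm_of_mem_doublyStochastic hP
  rw [dotProduct_sum_smul_permMatrix_mulVec, dotProduct] at h
  have hgap : ∑ σ, w σ * (∑ i, b i * a i - ∑ i, b i * a (σ i)) = 0 := by
    simp only [mul_sub, Finset.sum_sub_distrib, ← Finset.sum_mul, hw_sum, one_mul, h, sub_self]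
  have hw : ∀ σ ≠ 1, w σ = 0 := by
    intro σ hσ
    have hσ_gap := sub_pos.2 (sum_mul_comp_perm_lt_sum_mul_of_ne_one ha hb hσ)
    have hterm := (Finset.sum_eq_zero_iff_of_nonneg fun τ _ => mul_nonneg (hw_nonneg τ)
      (sub_nonneg.2 (hb.monotone.monovary ha.monotone).sum_mul_comp_perm_le_sum_mul)).1 hgap σ
      (Finset.mem_univ σ)
    exact (mul_eq_zero.1 hterm).resolve_right hσ_gap.ne'
  have hw_one : w 1 = 1 := by
    rwa [Finset.sum_eq_single 1 (fun σ _ hσ => hw σ hσ) (by simp)] at hw_sum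
  rw [Finset.sum_eq_single 1 (fun σ _ hσ => by rw [hw σ hσ, zero_smul]) (by simp), hw_one,
    one_smul, permMatrix_one]

theorem forall_sum_sq_diagonal_sub_conj_le_iff (ha : StrictMono a) (hb : StrictMono b)
    {W : Matrix ι ι R} (hW : W * Wᵀ = 1) :
    (∀ V : Matrix ι ι R, V * Vᵀ = 1 →
        ∑ i, ∑ j, (diagonal b - W * diagonal a * Wᵀ) i j ^ 2 ≤
          ∑ i, ∑ j, (diagonal b - V * diagonal a * Vᵀ) i j ^ 2) ↔ W ⊙ W = 1 := by
  have hab : Monovary b a := hb.monotone.monovary ha.monotone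
  constructor
  · intro hmin
    have h := hmin 1 (by simp)
    rw [sum_sq_diagonal_sub_conj a b hW, sum_sq_diagonal_sub_conj a b (by simp),
      hadamard_one_eq_one_iff.2 diag_one, one_mulVec] at h
    have hP := hadamard_self_mem_doublyStochastic hW
    exact eq_one_of_dotProduct_mulVec_eq ha hb hP
      (le_antisymm (dotProduct_mulVec_le_of_mem_doublyStochastic hab hP) (by linarith))
  · intro h V hV
    rw [sum_sq_diagonal_sub_conj a b hW, sum_sq_diagonal_sub_conj a b hV, h, one_mulVec]
    linarith [dotProduct_mulVec_le_of_mem_doublyStochastic hab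
      (hadamard_self_mem_doublyStochastic hV)]

end Rearrangement

theorem frobenius_min_orthogonal_iff_sign_diagonal
    (n : ℕ) (d₁ d₂ : Fin n → ℝ) (h₁ : StrictMono d₁) (h₂ : StrictMono d₂)
    (W : Matrix (Fin n) (Fin n) ℝ) (hW : W * Wᵀ = 1) :
    ((∀ V : Matrix (Fin n) (Fin n) ℝ, V * Vᵀ = 1 →
        (∑ i, ∑ j, ((Matrix.diagonal d₂ - W * Matrix.diagonal d₁ * Wᵀ) i j) ^ 2) ≤
        (∑ i, ∑ j, ((Matrix.diagonal d₂ - V * Matrix.diagonal d₁ * Vᵀ) i j) ^ 2)) ↔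
      ((∀ i j, i ≠ j → W i j = 0) ∧ ∀ i, W i i = 1 ∨ W i i = -1)) ∧
    Set.ncard {V : Matrix (Fin n) (Fin n) ℝ | V * Vᵀ = 1 ∧
        ∀ U : Matrix (Fin n) (Fin n) ℝ, U * Uᵀ = 1 →
          (∑ i, ∑ j, ((Matrix.diagonal d₂ - V * Matrix.diagonal d₁ * Vᵀ) i j) ^ 2) ≤
          (∑ i, ∑ j, ((Matrix.diagonal d₂ - U * Matrix.diagonal d₁ * Uᵀ) i j) ^ 2)}
      = 2 ^ n := by
  refine ⟨(forall_sum_sq_diagonal_sub_conj_le_iff h₁ h₂ hW).trans hadamard_self_eq_one_iff, ?_⟩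
  calc _ = {V : Matrix (Fin n) (Fin n) ℝ | V ⊙ V = 1}.ncard := by
        refine congr_arg Set.ncard (Set.ext fun V =>
          ⟨fun ⟨hV, hmin⟩ => (forall_sum_sq_diagonal_sub_conj_le_iff h₁ h₂ hV).1 hmin, fun h => ?_⟩)
        have hV := mul_transpose_self_eq_one_of_hadamard_self_eq_one h
        exact ⟨hV, (forall_sum_sq_diagonal_sub_conj_le_iff h₁ h₂ hV).2 h⟩
    _ = 2 ^ n := by rw [ncard_setOf_hadamard_self_eq_one, Fintype.card_fin]
end

section
/- Let K₀, K₁ be symmetric positive definite n×n matrices with Cholesky factors L₀, L₁, and suppose M := L₀⁻¹ K₁ L₀⁻ᵀ has distinct eigenvalues with eigendecomposition M = P₁ D₁ P₁ᵀ (P₁ orthogonal, D₁ diagonal with increasing entries). If B₀ satisfies K₁ = B₀ᵀ K₀ B₀ and also K₂ = B₀ᵀ K₁ B₀ where L₁⁻¹ K₂ L₁⁻ᵀ = P₂ D₂ P₂ᵀ with D₂ diagonal increasing and P₂ orthogonal, then B₀ = L₀⁻ᵀ P₁ W₀ P₂ᵀ L₁ᵀ for some diagonal matrix W₀ with diagonal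 entries ±1. -/
/-!
Whitening by the Cholesky factors and the eigenvectors turns `B₀` into
`Q = P₁ᵀ L₀ᵀ B₀ L₁⁻ᵀ P₂`, and the congruences `K₁ = B₀ᵀ K₀ B₀`, `K₂ = B₀ᵀ K₁ B₀` become
`Qᵀ Q = 1` and `Qᵀ D₁ Q = D₂`. Then `D₁ Q = Q D₂`, so a nonzero entry `Q i j` forces
`d₁ i = d₂ j`; every row of the orthogonal `Q` has such an entry, and since `d₁`, `d₂` are
strictly increasing the induced matching of indices is the identity. Hence `Q` is diagonal,
and orthogonality makes its entries `±1`.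
-/

open Matrix

namespace Matrix

variable {R n : Type*} [CommRing R] [Fintype n] [DecidableEq n]

theorem isUnit_det_of_posDef_mul_transpose {K : Type*} [Field K] [PartialOrder K] [StarRing K]
    {L : Matrix n n K} (h : (L * Lᵀ).PosDef) : IsUnit L.det := by
  have := (isUnit_iff_isUnit_det _).mp h.isUnit
  rw [det_mul] at this
  exact isUnit_of_mul_isUnit_left this

noncomputable def whitenedChange (L₀ P₁ B L₁ P₂ : Matrix n n R) : Matrix n n R :=
  P₁ᵀ * L₀ᵀ * B * (L₁⁻¹)ᵀ * P₂

theorem whitenedChange_transpose_mul_mul {L₀ P₁ B L₁ P₂ S D₁ D₂ : Matrix n n R}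
    (hL₀ : IsUnit L₀.det) (hP₂ : P₂ * P₂ᵀ = 1)
    (h₀ : L₀⁻¹ * S * (L₀⁻¹)ᵀ = P₁ * D₁ * P₁ᵀ)
    (h₁ : L₁⁻¹ * (Bᵀ * S * B) * (L₁⁻¹)ᵀ = P₂ * D₂ * P₂ᵀ) :
    (whitenedChange L₀ P₁ B L₁ P₂)ᵀ * D₁ * whitenedChange L₀ P₁ B L₁ P₂ = D₂ := by
  have hS : L₀ * (P₁ * D₁ * P₁ᵀ) * L₀ᵀ = S := by
    rw [← h₀, transpose_nonsing_inv]
    simp only [mul_assoc]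
    rw [mul_nonsing_inv_cancel_left _ _ hL₀, nonsing_inv_mul _ (isUnit_det_transpose _ hL₀),
      mul_one]
  have hP₂' : P₂ᵀ * P₂ = 1 := mul_eq_one_comm.mp hP₂
  calc (whitenedChange L₀ P₁ B L₁ P₂)ᵀ * D₁ * whitenedChange L₀ P₁ B L₁ P₂
      = P₂ᵀ * (L₁⁻¹ * (Bᵀ * (L₀ * (P₁ * D₁ * P₁ᵀ) * L₀ᵀ) * B) * (L₁⁻¹)ᵀ) * P₂ := by
        simp only [whitenedChange, transpose_mul, transpose_transpose, mul_assoc]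
    _ = P₂ᵀ * (P₂ * D₂ * P₂ᵀ) * P₂ := by rw [hS, h₁]
    _ = D₂ := by simp only [mul_assoc, hP₂', mul_one, ← mul_assoc P₂ᵀ, one_mul]

theorem eq_mul_whitenedChange_mul {L₀ P₁ B L₁ P₂ : Matrix n n R}
    (hL₀ : IsUnit L₀.det) (hL₁ : IsUnit L₁.det) (hP₁ : P₁ * P₁ᵀ = 1) (hP₂ : P₂ * P₂ᵀ = 1) :
    B = (L₀⁻¹)ᵀ * P₁ * whitenedChange L₀ P₁ B L₁ P₂ * P₂ᵀ * L₁ᵀ := by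
  simp only [whitenedChange, transpose_nonsing_inv, mul_assoc]
  rw [← mul_assoc P₁, hP₁, one_mul, ← mul_assoc P₂, hP₂, one_mul,
    nonsing_inv_mul_cancel_left _ _ (isUnit_det_transpose _ hL₀),
    nonsing_inv_mul _ (isUnit_det_transpose _ hL₁), mul_one]

theorem apply_eq_zero_of_diagonal_mul_eq_mul_diagonal [IsDomain R] {Q : Matrix n n R}
    {d₁ d₂ : n → R} (h : diagonal d₁ * Q = Q * diagonal d₂) {i j : n} (hij : d₁ i ≠ d₂ j) :
    Q i j = 0 := by
  have hij' := congrFun₂ h i j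
  rw [diagonal_mul, mul_diagonal, mul_comm, ← sub_eq_zero, ← mul_sub] at hij'
  exact (mul_eq_zero.mp hij').resolve_right (sub_ne_zero.mpr hij)

end Matrix

theorem StrictMono.eq_of_forall_exists_eq {ι α : Type*} [LinearOrder ι] [Finite ι] [Preorder α]
    {f g : ι → α} (hf : StrictMono f) (hg : StrictMono g) (h : ∀ i, ∃ j, f i = g j) : f = g := by
  choose σ hσ using h
  have hσ_mono : StrictMono σ := fun i j hij => hg.lt_iff_lt.mp (by rw [← hσ, ← hσ]; exact hf hij)
  funext i
  rw [hσ i, hσ_mono.apply_eq]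

namespace Matrix

variable {R ι : Type*} [CommRing R] [IsDomain R] [Preorder R] [Fintype ι] [LinearOrder ι]

theorem exists_sign_of_transpose_mul_diagonal_mul_eq_diagonal {Q : Matrix ι ι R} {d₁ d₂ : ι → R}
    (hd₁ : StrictMono d₁) (hd₂ : StrictMono d₂) (hQ : Qᵀ * Q = 1)
    (hQd : Qᵀ * diagonal d₁ * Q = diagonal d₂) :
    ∃ w : ι → R, (∀ i, w i = 1 ∨ w i = -1) ∧ Q = diagonal w := by
  have hQ' : Q * Qᵀ = 1 := mul_eq_one_comm.mp hQ
  have hcomm : diagonal d₁ * Q = Q * diagonal d₂ := by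
    rw [← hQd, ← mul_assoc, ← mul_assoc, hQ', one_mul]
  have hrow : ∀ i, ∃ j, Q i j ≠ 0 := by
    intro i
    by_contra! h
    simpa [mul_apply, h] using congrFun₂ hQ' i i
  have hd : d₁ = d₂ := hd₁.eq_of_forall_exists_eq hd₂ fun i => by
    obtain ⟨j, hj⟩ := hrow i
    exact ⟨j, not_imp_comm.mp (apply_eq_zero_of_diagonal_mul_eq_mul_diagonal hcomm) hj⟩
  have hdiag : Q = diagonal fun i => Q i i := by
    ext i j
    rcases eq_or_ne i j with rfl | hij
    · simp
    · rw [diagonal_apply_ne _ hij]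
      exact apply_eq_zero_of_diagonal_mul_eq_mul_diagonal hcomm (hd ▸ hd₂.injective.ne hij)
  refine ⟨fun i => Q i i, fun i => mul_self_eq_one_iff.mp ?_, hdiag⟩
  rw [hdiag, diagonal_transpose, diagonal_mul_diagonal, ← diagonal_one,
    diagonal_eq_diagonal_iff] at hQ
  exact hQ i

end Matrix

theorem qwendy_step2_characterization_general
    (n : ℕ) (K₀ K₁ K₂ L₀ L₁ B₀ : Matrix (Fin n) (Fin n) ℝ)
    (P₁ P₂ : Matrix (Fin n) (Fin n) ℝ) (d₁ d₂ : Fin n → ℝ)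
    (hK₀ : K₀.PosDef) (hK₁ : K₁.PosDef)
    (hc₀ : K₀ = L₀ * L₀ᵀ) (hc₁ : K₁ = L₁ * L₁ᵀ)
    (hP₁ : P₁ * P₁ᵀ = 1) (hP₂ : P₂ * P₂ᵀ = 1)
    (hd₁ : StrictMono d₁) (hd₂ : StrictMono d₂)
    (hdec₁ : L₀⁻¹ * K₁ * (L₀⁻¹)ᵀ = P₁ * Matrix.diagonal d₁ * P₁ᵀ)
    (hdec₂ : L₁⁻¹ * K₂ * (L₁⁻¹)ᵀ = P₂ * Matrix.diagonal d₂ * P₂ᵀ)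
    (hB1 : K₁ = B₀ᵀ * K₀ * B₀) (hB2 : K₂ = B₀ᵀ * K₁ * B₀) :
    ∃ w : Fin n → ℝ, (∀ i, w i = 1 ∨ w i = -1) ∧
      B₀ = (L₀⁻¹)ᵀ * P₁ * Matrix.diagonal w * P₂ᵀ * L₁ᵀ := by
  have hL₀ := isUnit_det_of_posDef_mul_transpose (hc₀ ▸ hK₀)
  have hL₁ := isUnit_det_of_posDef_mul_transpose (hc₁ ▸ hK₁)
  have hwhite : ∀ {L P : Matrix (Fin n) (Fin n) ℝ}, IsUnit L.det → P * Pᵀ = 1 →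
      L⁻¹ * (L * Lᵀ) * (L⁻¹)ᵀ = P * 1 * Pᵀ := fun hL hP => by
    rw [transpose_nonsing_inv, mul_one, hP, mul_assoc, mul_assoc,
      mul_nonsing_inv _ (isUnit_det_transpose _ hL), mul_one, nonsing_inv_mul _ hL]
  have hQ := whitenedChange_transpose_mul_mul hL₀ hP₂ (hc₀ ▸ hwhite hL₀ hP₁)
    (hB1 ▸ hc₁ ▸ hwhite hL₁ hP₂)
  rw [mul_one] at hQ
  obtain ⟨w, hw, hQw⟩ := exists_sign_of_transpose_mul_diagonal_mul_eq_diagonal hd₁ hd₂ hQ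
    (whitenedChange_transpose_mul_mul hL₀ hP₂ hdec₁ (hB2 ▸ hdec₂))
  exact ⟨w, hw, hQw ▸ eq_mul_whitenedChange_mul hL₀ hL₁ hP₁ hP₂⟩

theorem qwendy_step2_characterization
    (n : ℕ) (K₀ K₁ K₂ L₀ L₁ B₀ : Matrix (Fin n) (Fin n) ℝ)
    (P₁ P₂ : Matrix (Fin n) (Fin n) ℝ) (d₁ d₂ : Fin n → ℝ)
    (hK₀ : K₀.PosDef) (hK₁ : K₁.PosDef) (hK₂ : K₂.PosDef)
    (hL₀ : ∀ i j, i < j → L₀ i j = 0) (hL₁ : ∀ i j, i < j → L₁ i j = 0)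
    (hc₀ : K₀ = L₀ * L₀ᵀ) (hc₁ : K₁ = L₁ * L₁ᵀ)
    (hP₁ : P₁ * P₁ᵀ = 1) (hP₂ : P₂ * P₂ᵀ = 1)
    (hd₁ : StrictMono d₁) (hd₂ : StrictMono d₂)
    (hdec₁ : L₀⁻¹ * K₁ * (L₀⁻¹)ᵀ = P₁ * Matrix.diagonal d₁ * P₁ᵀ)
    (hdec₂ : L₁⁻¹ * K₂ * (L₁⁻¹)ᵀ = P₂ * Matrix.diagonal d₂ * P₂ᵀ)
    (hB1 : K₁ = B₀ᵀ * K₀ * B₀) (hB2 : K₂ = B₀ᵀ * K₁ * B₀) :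
    ∃ w : Fin n → ℝ, (∀ i, w i = 1 ∨ w i = -1) ∧
      B₀ = (L₀⁻¹)ᵀ * P₁ * Matrix.diagonal w * P₂ᵀ * L₁ᵀ :=
  qwendy_step2_characterization_general n K₀ K₁ K₂ L₀ L₁ B₀ P₁ P₂ d₁ d₂ hK₀ hK₁ hc₀ hc₁ hP₁ hP₂ hd₁
    hd₂ hdec₁ hdec₂ hB1 hB2
end

section
/- Let d₁, d₂ ∈ ℝⁿ be strictly increasing row vectors and let S be any doubly stochastic n×n matrix. Then d₁ S d₂ᵀ ≤ d₁ d₂ᵀ, with equality if and only if S = I. -/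
open Matrix BigOperators

theorem doublyStochastic_rearrangement
    (n : ℕ) (d₁ d₂ : Fin n → ℝ) (h₁ : StrictMono d₁) (h₂ : StrictMono d₂)
    (S : Matrix (Fin n) (Fin n) ℝ)
    (hS_nonneg : ∀ i j, 0 ≤ S i j)
    (hS_row : ∀ i, ∑ j, S i j = 1)
    (hS_col : ∀ j, ∑ i, S i j = 1) :
    (∑ i, ∑ j, d₁ i * S i j * d₂ j) ≤ (∑ i, d₁ i * d₂ i) ∧
    ((∑ i, ∑ j, d₁ i * S i j * d₂ j) = (∑ i, d₁ i * d₂ i) ↔ S = 1) := by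
  have hmem : S ∈ doublyStochastic ℝ (Fin n) :=
    mem_doublyStochastic_iff_sum.2 ⟨hS_nonneg, hS_row, hS_col⟩
  obtain ⟨w, hw0, hw1, hwS⟩ := exists_eq_sum_perm_of_mem_doublyStochastic hmem
  have hmono' : Monovary d₂ d₁ := fun i j hij => h₂.monotone (h₁.lt_iff_lt.1 hij).le
  -- value of the sum for a permutation matrix
  have hperm : ∀ σ : Equiv.Perm (Fin n),
      ∑ i, d₂ (σ i) * d₁ i ≤ ∑ i, d₂ i * d₁ i :=
    fun σ => hmono'.sum_comp_perm_mul_le_sum_mul (σ := σ)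
  have hperm_eq : ∀ σ : Equiv.Perm (Fin n),
      (∑ i, d₂ (σ i) * d₁ i = ∑ i, d₂ i * d₁ i) ↔ σ = 1 := by
    intro σ
    rw [hmono'.sum_comp_perm_mul_eq_sum_mul_iff (σ := σ)]
    constructor
    · intro hm
      have hmonoσ : Monotone (σ : Fin n → Fin n) := by
        intro i j hij
        rcases eq_or_lt_of_le hij with rfl | hlt
        · exact le_rfl
        · exact h₂.le_iff_le.1 (hm (h₁ hlt))
      have hsm : StrictMono (σ : Fin n → Fin n) :=
        hmonoσ.strictMono_of_injective σ.injective
      have hid : (σ : Fin n → Fin n) = id := by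
        refine (hsm.range_inj strictMono_id).1 ?_
        simp [Set.range_eq_univ.2 σ.surjective]
      exact Equiv.ext fun i => congrFun hid i
    · rintro rfl
      simpa using hmono'
  -- key identity : the bilinear form equals a convex combination over permutations
  have hkey : (∑ i, ∑ j, d₁ i * S i j * d₂ j)
      = ∑ σ : Equiv.Perm (Fin n), w σ * ∑ i, d₂ (σ i) * d₁ i := by
    have hSij : ∀ i j, S i j = ∑ σ : Equiv.Perm (Fin n),
        w σ * (if σ i = j then 1 else 0) := by
      intro i j
      rw [← hwS]
      simp [Matrix.sum_apply, Equiv.Perm.permMatrix, PEquiv.toMatrix_apply,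
        Equiv.toPEquiv_apply, eq_comm]
    calc (∑ i, ∑ j, d₁ i * S i j * d₂ j)
        = ∑ i, ∑ j, ∑ σ : Equiv.Perm (Fin n),
            w σ * (if σ i = j then d₁ i * d₂ j else 0) := by
          refine Finset.sum_congr rfl fun i _ => Finset.sum_congr rfl fun j _ => ?_
          rw [hSij i j, Finset.mul_sum, Finset.sum_mul]
          refine Finset.sum_congr rfl fun σ _ => ?_
          by_cases h : σ i = j <;> simp [h] <;> ring
      _ = ∑ σ : Equiv.Perm (Fin n), ∑ i, ∑ j,
            w σ * (if σ i = j then d₁ i * d₂ j else 0) := by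
          rw [show (∑ i, ∑ j, ∑ σ : Equiv.Perm (Fin n),
              w σ * (if σ i = j then d₁ i * d₂ j else 0))
              = ∑ i, ∑ σ : Equiv.Perm (Fin n), ∑ j,
              w σ * (if σ i = j then d₁ i * d₂ j else 0) from
            Finset.sum_congr rfl fun _ _ => Finset.sum_comm, Finset.sum_comm]
      _ = ∑ σ : Equiv.Perm (Fin n), w σ * ∑ i, d₂ (σ i) * d₁ i := by
          refine Finset.sum_congr rfl fun σ _ => ?_
          rw [Finset.mul_sum]
          refine Finset.sum_congr rfl fun i _ => ?_
          rw [← Finset.mul_sum,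
            Finset.sum_ite_eq Finset.univ (σ i) (fun j => d₁ i * d₂ j)]
          simp [mul_comm]
  have hle : (∑ i, ∑ j, d₁ i * S i j * d₂ j) ≤ ∑ i, d₁ i * d₂ i := by
    rw [hkey]
    calc ∑ σ : Equiv.Perm (Fin n), w σ * ∑ i, d₂ (σ i) * d₁ i
        ≤ ∑ σ : Equiv.Perm (Fin n), w σ * ∑ i, d₂ i * d₁ i :=
          Finset.sum_le_sum fun σ _ => mul_le_mul_of_nonneg_left (hperm σ) (hw0 σ)
      _ = ∑ i, d₁ i * d₂ i := by
          rw [← Finset.sum_mul, hw1, one_mul]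
          exact Finset.sum_congr rfl fun i _ => mul_comm _ _
  refine ⟨hle, ?_, ?_⟩
  · intro heq
    -- from equality, every σ with positive weight must be the identity
    have hterm : ∀ σ ∈ Finset.univ, w σ * ∑ i, d₂ (σ i) * d₁ i
        = w σ * ∑ i, d₂ i * d₁ i := by
      rw [← Finset.sum_eq_sum_iff_of_le
        (fun σ _ => mul_le_mul_of_nonneg_left (hperm σ) (hw0 σ))]
      rw [← hkey, heq, ← Finset.sum_mul, hw1, one_mul]
      exact Finset.sum_congr rfl fun i _ => mul_comm _ _
    have hzero : ∀ σ : Equiv.Perm (Fin n), σ ≠ 1 → w σ = 0 := by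
      intro σ hσ
      by_contra hw
      have hwpos : 0 < w σ := lt_of_le_of_ne (hw0 σ) (Ne.symm hw)
      have := mul_left_cancel₀ (ne_of_gt hwpos) (hterm σ (Finset.mem_univ σ))
      exact hσ ((hperm_eq σ).1 this)
    -- hence S is the identity permutation matrix
    rw [← hwS]
    have : ∀ σ : Equiv.Perm (Fin n),
        w σ • σ.permMatrix ℝ = w σ • (1 : Equiv.Perm (Fin n)).permMatrix ℝ := by
      intro σ
      by_cases hσ : σ = 1
      · rw [hσ]
      · rw [hzero σ hσ]; simp
    rw [Finset.sum_congr rfl fun σ _ => this σ, ← Finset.sum_smul, hw1, one_smul]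
    ext i j
    simp [Equiv.Perm.permMatrix, PEquiv.toMatrix_apply, Equiv.toPEquiv_apply,
      Matrix.one_apply, eq_comm]
  · rintro rfl
    refine Finset.sum_congr rfl fun i _ => ?_
    rw [Finset.sum_eq_single i (fun j _ hj => by simp [Matrix.one_apply, Ne.symm hj])
      (by simp)]
    simp
end
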